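/- Let A be a commutative ring and e ≥ 1, k ≥ 0 integers. Then R₋ := A[x,y,t]/( (xy − t^e) + the ideal generated by all monomials y^β t^γ with βe + γ ≥ k+1 ) is a free A-module with basis given by the images of the monomials x^i·t^γ for i ≥ 0 and 0 ≤ γ ≤ k, together with y^j·t^γ for j ≥ 1, γ ≥ 0 and j·e + γ ≤ k. In particular, R₋ is generated as a module over A[t]/(t^{k+1}) by the images of x^i (i ≥ 0) and y^j (j ≥ 1), and the A[t]/(t^{k+1})-submodule generated by the x^i is a free direct summand with basis {x^i : i ≥ 0}. -/

import Mathlib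

/-!
Using `xy = t^e`, every monomial `x^a y^b t^c` becomes `x^(a-b) t^(c+be)` or `y^(b-a) t^(c+ae)`
in `R₋`, which is either one of the claimed basis vectors or, by the truncation relations, zero;
so these vectors span. The same rewriting, read off on exponents, defines an `A`-linear map from
`A[x,y,t]` to the free module on the claimed basis; it kills the ideal because the normal form
does not change when a monomial is multiplied by `xy` instead of `t^e`, and it vanishes on
multiples of `y^β t^γ` with `βe + γ > k`. It sends each basis monomial to the corresponding
unit vector, which gives linear independence.

Since `ψ(t^γ) x^i = x^i t^γ`, the `A[t]/(t^{k+1})`-combinations of the `x^i` lie in the span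
of the basis vectors `x^i t^γ` and those of the `y^j` in the span of the remaining ones. The
decomposition is therefore unique: the `t^γ`-coefficient of the coefficient of `x^i` is the
coordinate at `x^i t^γ`.
-/

open MvPolynomial

/-- The ideal defining `R₋ = A[x,y,t]/((xy − t^e) + (y^β t^γ : βe+γ ≥ k+1))`,
with `x = X 0`, `y = X 1`, `t = X 2`. -/
noncomputable def stmt10I (A : Type*) [CommRing A] (e k : ℕ) :
    Ideal (MvPolynomial (Fin 3) A) :=
  Ideal.span ({X 0 * X 1 - (X 2) ^ e} ∪
    {p | ∃ β γ : ℕ, k + 1 ≤ β * e + γ ∧ p = (X 1) ^ β * (X 2) ^ γ})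

namespace Thickening

section NormalForm

variable (e k : ℕ)

abbrev BasisIndex :=
  {p : ℕ × ℕ // p.2 ≤ k} ⊕ {p : ℕ × ℕ // 1 ≤ p.1 ∧ p.1 * e + p.2 ≤ k}

/-- Modulo `xy = t^e`, the monomial `x^a y^b t^c` equals `x^(a-b) t^(c+be)` if `b ≤ a` and
`y^(b-a) t^(c+ae)` otherwise; `none` records that this monomial lies in the ideal. -/
def normalForm (a b c : ℕ) : Option (BasisIndex e k) :=
  if hba : b ≤ a then
    if h : c + b * e ≤ k then some (.inl ⟨(a - b, c + b * e), h⟩) else none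
  else
    if h : (b - a) * e + (c + a * e) ≤ k then
      some (.inr ⟨(b - a, c + a * e), by omega, h⟩) else none

variable {e k}

theorem normalForm_succ_succ (a b c : ℕ) :
    normalForm e k (a + 1) (b + 1) c = normalForm e k a b (c + e) := by
  have hb : c + (b + 1) * e = c + e + b * e := by ring
  have ha : c + (a + 1) * e = c + e + a * e := by ring
  simp only [normalForm, Nat.add_le_add_iff_right, Nat.add_sub_add_right, hb, ha]

theorem normalForm_eq_none {β γ : ℕ} (h : k + 1 ≤ β * e + γ) (a b c : ℕ) :
    normalForm e k a (b + β) (c + γ) = none := by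
  have hle : β * e ≤ (b + β) * e := Nat.mul_le_mul_right e (by omega)
  have hle' : β * e ≤ (b + β - a) * e + a * e := by
    rw [← Nat.add_mul]; exact Nat.mul_le_mul_right e (by omega)
  unfold normalForm
  split_ifs <;> first | rfl | omega

end NormalForm

noncomputable section PolynomialLevel

theorem monomial_eq_smul_monomial_one {σ R : Type*} [CommSemiring R] (n : σ →₀ ℕ) (a : R) :
    monomial n a = a • monomial n 1 := by
  rw [smul_monomial, smul_eq_mul, mul_one]

variable (A : Type*) [CommRing A] (e k : ℕ)

def basisMonomial : BasisIndex e k → MvPolynomial (Fin 3) A :=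
  Sum.elim (fun p => X 0 ^ p.1.1 * X 2 ^ p.1.2) (fun p => X 1 ^ p.1.1 * X 2 ^ p.1.2)

def normalFormVector (n : Fin 3 →₀ ℕ) : BasisIndex e k →₀ A :=
  (normalForm e k (n 0) (n 1) (n 2)).elim 0 (Finsupp.single · 1)

def normalFormMap : MvPolynomial (Fin 3) A →ₗ[A] (BasisIndex e k →₀ A) :=
  (basisMonomials (Fin 3) A).constr ℕ (normalFormVector A e k)

variable {A e k}

theorem normalFormMap_monomial (n : Fin 3 →₀ ℕ) (a : A) :
    normalFormMap A e k (monomial n a) = a • normalFormVector A e k n := by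
  rw [monomial_eq_smul_monomial_one, map_smul]
  congr 1
  exact (basisMonomials (Fin 3) A).constr_basis ℕ (normalFormVector A e k) n

theorem normalFormMap_mul_eq_zero {g : MvPolynomial (Fin 3) A}
    (hg : ∀ n, normalFormMap A e k (monomial n 1 * g) = 0) (q : MvPolynomial (Fin 3) A) :
    normalFormMap A e k (q * g) = 0 := by
  induction q using MvPolynomial.induction_on' with
  | add p q hp hq => rw [add_mul, map_add, hp, hq, add_zero]
  | monomial n a =>
    rw [monomial_eq_smul_monomial_one, smul_mul_assoc, map_smul, hg, smul_zero]

theorem normalFormMap_eq_zero_of_mem {f : MvPolynomial (Fin 3) A} (hf : f ∈ stmt10I A e k) :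
    normalFormMap A e k f = 0 := by
  suffices ∀ q, normalFormMap A e k (q * f) = 0 by simpa using this 1
  refine Submodule.span_induction ?_ (by simp) ?_ ?_ hf
  · rintro g (rfl | ⟨β, γ, hβγ, rfl⟩) <;> refine normalFormMap_mul_eq_zero fun n => ?_
    · rw [mul_sub, ← mul_assoc, X, X, X_pow_eq_monomial, monomial_mul, monomial_mul,
        monomial_mul, map_sub, normalFormMap_monomial, normalFormMap_monomial]
      simp [normalFormVector, normalForm_succ_succ]
    · rw [X_pow_eq_monomial, X_pow_eq_monomial, monomial_mul, monomial_mul,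
        normalFormMap_monomial]
      simp [normalFormVector, normalForm_eq_none hβγ]
  · intro x y _ _ hx hy q
    rw [mul_add, map_add, hx, hy, add_zero]
  · intro r x _ hx q
    rw [smul_eq_mul, ← mul_assoc]
    exact hx (q * r)

theorem normalFormMap_basisMonomial (s : BasisIndex e k) :
    normalFormMap A e k (basisMonomial A e k s) = Finsupp.single s 1 := by
  rcases s with ⟨⟨i, γ⟩, h⟩ | ⟨⟨j, γ⟩, hj, h⟩ <;>
    simp only [basisMonomial, Sum.elim_inl, Sum.elim_inr, X_pow_eq_monomial, monomial_mul,
      one_mul, normalFormMap_monomial, one_smul]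
  · simp [normalFormVector, normalForm, h]
  · simp [normalFormVector, normalForm, h, Nat.one_le_iff_ne_zero.mp hj]

end PolynomialLevel

noncomputable section QuotientLevel

variable {A : Type*} [CommRing A] {e k : ℕ}

local notation "R₋" => MvPolynomial (Fin 3) A ⧸ stmt10I A e k
local notation "mkR" => Ideal.Quotient.mk (stmt10I A e k)

theorem mk_X0_mul_X1 : mkR (X 0 * X 1) = mkR (X 2 ^ e) :=
  Ideal.Quotient.eq.mpr (Ideal.subset_span (Or.inl rfl))

theorem mk_X1_pow_mul_X2_pow_eq_zero {β γ : ℕ} (h : k + 1 ≤ β * e + γ) :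
    mkR (X 1 ^ β * X 2 ^ γ) = 0 :=
  Ideal.Quotient.eq_zero_iff_mem.mpr (Ideal.subset_span (Or.inr ⟨β, γ, h, rfl⟩))

theorem mk_X_pow_mul_X_pow_mul_X_pow_shift {a b m : ℕ} (ha : m ≤ a) (hb : m ≤ b) (c : ℕ) :
    mkR (X 0 ^ a * X 1 ^ b * X 2 ^ c) =
      mkR (X 0 ^ (a - m) * X 1 ^ (b - m) * X 2 ^ (c + m * e)) := by
  obtain ⟨a, rfl⟩ := Nat.exists_eq_add_of_le' ha
  obtain ⟨b, rfl⟩ := Nat.exists_eq_add_of_le' hb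
  calc mkR (X 0 ^ (a + m) * X 1 ^ (b + m) * X 2 ^ c)
      = mkR (X 0 ^ a * X 1 ^ b * X 2 ^ c) * mkR (X 0 * X 1) ^ m := by
        rw [← map_pow, ← map_mul]; ring_nf
    _ = _ := by
        rw [mk_X0_mul_X1, ← map_pow, ← map_mul, Nat.add_sub_cancel, Nat.add_sub_cancel]; ring_nf

theorem mk_X_pow_mul_X_pow_mul_X_pow (a b c : ℕ) :
    mkR (X 0 ^ a * X 1 ^ b * X 2 ^ c) =
      (normalForm e k a b c).elim 0 (mkR ∘ basisMonomial A e k) := by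
  unfold normalForm
  split_ifs with hba h h
  · simp [mk_X_pow_mul_X_pow_mul_X_pow_shift hba le_rfl, basisMonomial]
  · rw [mk_X_pow_mul_X_pow_mul_X_pow_shift hba le_rfl, mul_assoc, map_mul,
      mk_X1_pow_mul_X2_pow_eq_zero (by omega), mul_zero]
    rfl
  · rw [mk_X_pow_mul_X_pow_mul_X_pow_shift le_rfl (le_of_not_ge hba)]
    simp [basisMonomial]
  · rw [mk_X_pow_mul_X_pow_mul_X_pow_shift le_rfl (le_of_not_ge hba), mul_assoc, map_mul,
      mk_X1_pow_mul_X2_pow_eq_zero (by omega), mul_zero]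
    rfl

theorem mk_smul (a : A) (p : MvPolynomial (Fin 3) A) : mkR (a • p) = a • mkR p :=
  Submodule.Quotient.mk_smul ((stmt10I A e k).restrictScalars A) a p

theorem mk_monomial (n : Fin 3 →₀ ℕ) (a : A) :
    mkR (monomial n a) =
      a • (normalForm e k (n 0) (n 1) (n 2)).elim 0 (mkR ∘ basisMonomial A e k) := by
  have : (monomial n 1 : MvPolynomial (Fin 3) A) = X 0 ^ n 0 * X 1 ^ n 1 * X 2 ^ n 2 := by
    rw [monomial_eq, C_1, one_mul, Finsupp.prod_fintype _ _ (by simp), Fin.prod_univ_three]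
  rw [monomial_eq_smul_monomial_one, this, mk_smul, mk_X_pow_mul_X_pow_mul_X_pow]

variable (A e k) in
def normalFormMapQuotient : R₋ →ₗ[A] (BasisIndex e k →₀ A) :=
  ((stmt10I A e k).restrictScalars A).liftQ (normalFormMap A e k)
      (fun _ hf => normalFormMap_eq_zero_of_mem hf) ∘ₗ
    (Submodule.Quotient.restrictScalarsEquiv A (stmt10I A e k)).symm.toLinearMap

theorem linearIndependent_mk_basisMonomial :
    LinearIndependent A (mkR ∘ basisMonomial A e k) := by
  refine LinearIndependent.of_comp (normalFormMapQuotient A e k) ?_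
  convert Finsupp.linearIndependent_single_one A (BasisIndex e k) using 1
  ext1 s
  exact normalFormMap_basisMonomial s

theorem span_mk_basisMonomial :
    ⊤ ≤ Submodule.span A (Set.range (mkR ∘ basisMonomial A e k)) := by
  rintro r -
  obtain ⟨p, rfl⟩ := Ideal.Quotient.mk_surjective r
  induction p using MvPolynomial.induction_on' with
  | add p q hp hq => rw [map_add]; exact Submodule.add_mem _ hp hq
  | monomial n a =>
    rw [mk_monomial]
    refine Submodule.smul_mem _ a ?_
    rcases normalForm e k (n 0) (n 1) (n 2) with _ | s
    · exact Submodule.zero_mem _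
    · exact Submodule.subset_span ⟨s, rfl⟩

variable (A e k) in
def basis : Module.Basis (BasisIndex e k) A R₋ :=
  .mk linearIndependent_mk_basisMonomial span_mk_basisMonomial

theorem basis_apply (s : BasisIndex e k) : basis A e k s = mkR (basisMonomial A e k s) :=
  Module.Basis.mk_apply _ _ s

theorem mk_X0_pow_mul_X2_pow (i γ : ℕ) :
    mkR (X 0 ^ i * X 2 ^ γ) = if h : γ ≤ k then basis A e k (.inl ⟨(i, γ), h⟩) else 0 := by
  split_ifs with h
  · rw [basis_apply]; rfl
  · rw [← one_mul (X 2 ^ γ), ← pow_zero (X 1), map_mul,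
      mk_X1_pow_mul_X2_pow_eq_zero (by omega), mul_zero]

theorem mk_X1_pow_mul_X2_pow {j : ℕ} (hj : 1 ≤ j) (γ : ℕ) :
    mkR (X 1 ^ j * X 2 ^ γ) =
      if h : j * e + γ ≤ k then basis A e k (.inr ⟨(j, γ), hj, h⟩) else 0 := by
  split_ifs with h
  · rw [basis_apply]; rfl
  · exact mk_X1_pow_mul_X2_pow_eq_zero (by omega)

variable (A e k) in
theorem disjoint_span_basis_inl_inr :
    Disjoint (Submodule.span A (Set.range (basis A e k ∘ Sum.inl)))
      (Submodule.span A (Set.range (basis A e k ∘ Sum.inr))) := by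
  simpa [Set.range_comp] using (basis A e k).linearIndependent.disjoint_span_image
    Set.isCompl_range_inl_range_inr.disjoint

end QuotientLevel

noncomputable section TruncatedPolynomialAction

variable {A : Type*} [CommRing A] {e k : ℕ}

local notation "R₋" => MvPolynomial (Fin 3) A ⧸ stmt10I A e k
local notation "mkR" => Ideal.Quotient.mk (stmt10I A e k)
local notation "Aₜ" => Polynomial A ⧸ Ideal.span {(Polynomial.X : Polynomial A) ^ (k + 1)}
local notation "mkT" => Ideal.Quotient.mk (Ideal.span {(Polynomial.X : Polynomial A) ^ (k + 1)})

def xCombination (ψ : Aₜ →+* R₋) (c : ℕ →₀ Aₜ) : R₋ :=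
  c.sum fun i a => ψ a * mkR (X 0 ^ i)

def yCombination (ψ : Aₜ →+* R₋) (d : ℕ →₀ Aₜ) : R₋ :=
  d.sum fun j a => ψ a * mkR (X 1 ^ (j + 1))

variable {ψ : Polynomial A ⧸ Ideal.span {(Polynomial.X : Polynomial A) ^ (k + 1)} →+*
  MvPolynomial (Fin 3) A ⧸ stmt10I A e k}

theorem xCombination_add (c c' : ℕ →₀ Aₜ) :
    xCombination ψ (c + c') = xCombination ψ c + xCombination ψ c' :=
  Finsupp.sum_add_index' (by simp) (by simp [add_mul])

theorem xCombination_sub (c c' : ℕ →₀ Aₜ) :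
    xCombination ψ (c - c') = xCombination ψ c - xCombination ψ c' :=
  Finsupp.sum_sub_index (by simp [sub_mul])

theorem yCombination_add (d d' : ℕ →₀ Aₜ) :
    yCombination ψ (d + d') = yCombination ψ d + yCombination ψ d' :=
  Finsupp.sum_add_index' (by simp) (by simp [add_mul])

variable
  (hψC : ∀ a : A, ψ (Ideal.Quotient.mk _ (Polynomial.C a)) = Ideal.Quotient.mk _ (C a))
  (hψX : ψ (Ideal.Quotient.mk _ Polynomial.X) = Ideal.Quotient.mk _ (X 2))
include hψC hψX

theorem psi_mk (q : Polynomial A) : ψ (mkT q) = mkR (Polynomial.eval₂ C (X 2) q) := by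
  have : ψ.comp mkT = Polynomial.eval₂RingHom ((Ideal.Quotient.mk _).comp C) (mkR (X 2)) :=
    Polynomial.ringHom_ext (by simpa using hψC) (by simpa using hψX)
  rw [← RingHom.comp_apply, this, Polynomial.coe_eval₂RingHom, ← Polynomial.hom_eval₂]

theorem psi_mk_mul_mk (q : Polynomial A) (z : MvPolynomial (Fin 3) A) :
    ψ (mkT q) * mkR z = ∑ γ ∈ q.support, q.coeff γ • mkR (z * X 2 ^ γ) := by
  rw [psi_mk hψC hψX, ← map_mul, Polynomial.eval₂_eq_sum, Polynomial.sum_def, Finset.sum_mul,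
    map_sum]
  refine Finset.sum_congr rfl fun γ _ => ?_
  rw [← mk_smul, smul_eq_C_mul]
  congr 1
  ring

theorem smul_basis_inl (a : A) {i γ : ℕ} (h : γ ≤ k) :
    a • basis A e k (.inl ⟨(i, γ), h⟩) =
      ψ (mkT (Polynomial.C a * Polynomial.X ^ γ)) * mkR (X 0 ^ i) := by
  rw [basis_apply, ← mk_smul, psi_mk hψC hψX, ← map_mul, Polynomial.eval₂_mul,
    Polynomial.eval₂_C, Polynomial.eval₂_X_pow, smul_eq_C_mul, basisMonomial, Sum.elim_inl]
  ring_nf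

theorem smul_basis_inr (a : A) {j γ : ℕ} (h : 1 ≤ j + 1 ∧ (j + 1) * e + γ ≤ k) :
    a • basis A e k (.inr ⟨(j + 1, γ), h⟩) =
      ψ (mkT (Polynomial.C a * Polynomial.X ^ γ)) * mkR (X 1 ^ (j + 1)) := by
  rw [basis_apply, ← mk_smul, psi_mk hψC hψX, ← map_mul, Polynomial.eval₂_mul,
    Polynomial.eval₂_C, Polynomial.eval₂_X_pow, smul_eq_C_mul, basisMonomial, Sum.elim_inr]
  ring_nf

theorem exists_eq_xCombination_add_yCombination (r : R₋) :
    ∃ c d, r = xCombination ψ c + yCombination ψ d := by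
  obtain ⟨p, rfl⟩ := Ideal.Quotient.mk_surjective r
  induction p using MvPolynomial.induction_on' with
  | add p q hp hq =>
    obtain ⟨c, d, hp⟩ := hp
    obtain ⟨c', d', hq⟩ := hq
    refine ⟨c + c', d + d', ?_⟩
    rw [map_add, hp, hq, xCombination_add, yCombination_add]
    abel
  | monomial n a =>
    rw [mk_monomial]
    rcases normalForm e k (n 0) (n 1) (n 2) with _ | ⟨⟨i, γ⟩, h⟩ | ⟨⟨j, γ⟩, hj, h⟩
    · exact ⟨0, 0, by simp [xCombination, yCombination]⟩
    · refine ⟨.single i (mkT (Polynomial.C a * Polynomial.X ^ γ)), 0, ?_⟩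
      change a • mkR (basisMonomial A e k _) = _
      rw [← basis_apply, smul_basis_inl hψC hψX, xCombination, yCombination,
        Finsupp.sum_single_index (by simp), Finsupp.sum_zero_index, add_zero]
    · obtain ⟨j, rfl⟩ := Nat.exists_eq_add_of_le' hj
      refine ⟨0, .single j (mkT (Polynomial.C a * Polynomial.X ^ γ)), ?_⟩
      change a • mkR (basisMonomial A e k _) = _
      rw [← basis_apply, smul_basis_inr hψC hψX, xCombination, yCombination,
        Finsupp.sum_single_index (by simp), Finsupp.sum_zero_index, zero_add]

theorem xCombination_mem (c : ℕ →₀ Aₜ) :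
    xCombination ψ c ∈ Submodule.span A (Set.range (basis A e k ∘ Sum.inl)) := by
  refine Submodule.finsuppSum_mem _ _ _ (g := fun _ a => ψ a * _) fun i _ => ?_
  obtain ⟨q, hq⟩ := Ideal.Quotient.mk_surjective (c i)
  rw [← hq, psi_mk_mul_mk hψC hψX]
  refine Submodule.sum_mem _ fun γ _ => Submodule.smul_mem _ _ ?_
  rw [mk_X0_pow_mul_X2_pow]
  split_ifs
  · exact Submodule.subset_span ⟨_, rfl⟩
  · exact Submodule.zero_mem _

theorem yCombination_mem (d : ℕ →₀ Aₜ) :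
    yCombination ψ d ∈ Submodule.span A (Set.range (basis A e k ∘ Sum.inr)) := by
  refine Submodule.finsuppSum_mem _ _ _ (g := fun _ a => ψ a * _) fun j _ => ?_
  obtain ⟨q, hq⟩ := Ideal.Quotient.mk_surjective (d j)
  rw [← hq, psi_mk_mul_mk hψC hψX]
  refine Submodule.sum_mem _ fun γ _ => Submodule.smul_mem _ _ ?_
  rw [mk_X1_pow_mul_X2_pow (Nat.le_add_left 1 j)]
  split_ifs
  · exact Submodule.subset_span ⟨_, rfl⟩
  · exact Submodule.zero_mem _

theorem basis_repr_psi_mul_mk_X0_pow (q : Polynomial A) (i i₀ γ₀ : ℕ) (h₀ : γ₀ ≤ k) :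
    (basis A e k).repr (ψ (mkT q) * mkR (X 0 ^ i)) (.inl ⟨(i₀, γ₀), h₀⟩) =
      if i = i₀ then q.coeff γ₀ else 0 := by
  have hcoord (γ : ℕ) :
      (basis A e k).repr (mkR (X 0 ^ i * X 2 ^ γ)) (.inl ⟨(i₀, γ₀), h₀⟩) =
        if γ = γ₀ then if i = i₀ then 1 else 0 else 0 := by
    rw [mk_X0_pow_mul_X2_pow]
    split_ifs <;> simp_all
  rw [psi_mk_mul_mk hψC hψX, map_sum, Finsupp.finsetSum_apply]
  simp only [map_smul, Finsupp.smul_apply, hcoord, smul_eq_mul, mul_ite, mul_one, mul_zero,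
    Finset.sum_ite_eq']
  split_ifs <;> simp_all

theorem xCombination_injective : Function.Injective (xCombination ψ) := by
  intro c c' h
  rw [← sub_eq_zero, ← xCombination_sub] at h
  rw [← sub_eq_zero]
  generalize c - c' = d at h ⊢
  ext i₀
  obtain ⟨q, hq⟩ := Ideal.Quotient.mk_surjective (d i₀)
  rw [Finsupp.zero_apply, ← hq, Ideal.Quotient.eq_zero_iff_mem, Ideal.mem_span_singleton,
    Polynomial.X_pow_dvd_iff]
  intro γ₀ hγ₀
  -- only the `i₀`-th summand has a nonzero coordinate at `x^i₀ t^γ₀`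
  have hγ₀' : γ₀ ≤ k := Nat.le_of_lt_succ hγ₀
  calc q.coeff γ₀
      = (basis A e k).repr (xCombination ψ d) (.inl ⟨(i₀, γ₀), hγ₀'⟩) := by
        rw [xCombination, Finsupp.sum, map_sum, Finsupp.finsetSum_apply,
          Finset.sum_eq_single i₀]
        · rw [← hq, basis_repr_psi_mul_mk_X0_pow hψC hψX, if_pos rfl]
        · intro i _ hi
          obtain ⟨q', hq'⟩ := Ideal.Quotient.mk_surjective (d i)
          rw [← hq', basis_repr_psi_mul_mk_X0_pow hψC hψX, if_neg hi]
        · intro hi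
          rw [Finsupp.notMem_support_iff.mp hi, map_zero, zero_mul, map_zero, Finsupp.zero_apply]
    _ = 0 := by rw [h, map_zero, Finsupp.zero_apply]

theorem eq_of_xCombination_add_eq {c c' : ℕ →₀ Aₜ} {w w' : R₋}
    (hw : w ∈ Submodule.span A (Set.range (basis A e k ∘ Sum.inr)))
    (hw' : w' ∈ Submodule.span A (Set.range (basis A e k ∘ Sum.inr)))
    (h : xCombination ψ c + w = xCombination ψ c' + w') : c = c' ∧ w = w' := by
  have hdiff : xCombination ψ c - xCombination ψ c' = w' - w := by
    rw [sub_eq_sub_iff_add_eq_add, h, add_comm]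
  have hx : xCombination ψ c = xCombination ψ c' :=
    sub_eq_zero.mp <| Submodule.disjoint_def.mp (disjoint_span_basis_inl_inr A e k) _
      (sub_mem (xCombination_mem hψC hψX c) (xCombination_mem hψC hψX c'))
      (hdiff ▸ sub_mem hw' hw)
  exact ⟨xCombination_injective hψC hψX hx, add_left_cancel (hx ▸ h)⟩

end TruncatedPolynomialAction

end Thickening

theorem stmt10_general (A : Type*) [CommRing A] (e k : ℕ)
    (ψ : (Polynomial A ⧸ Ideal.span {(Polynomial.X : Polynomial A) ^ (k + 1)}) →+*
      (MvPolynomial (Fin 3) A ⧸ stmt10I A e k))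
    (hψC : ∀ a : A,
      ψ (Ideal.Quotient.mk (Ideal.span {(Polynomial.X : Polynomial A) ^ (k + 1)})
          (Polynomial.C a)) =
        Ideal.Quotient.mk (stmt10I A e k) (C a))
    (hψX : ψ (Ideal.Quotient.mk (Ideal.span {(Polynomial.X : Polynomial A) ^ (k + 1)})
          Polynomial.X) =
        Ideal.Quotient.mk (stmt10I A e k) (X 2)) :
    (∃ B : Module.Basis ({p : ℕ × ℕ // p.2 ≤ k} ⊕ {p : ℕ × ℕ // 1 ≤ p.1 ∧ p.1 * e + p.2 ≤ k}) A
        (MvPolynomial (Fin 3) A ⧸ stmt10I A e k),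
      (∀ p : {p : ℕ × ℕ // p.2 ≤ k},
        B (Sum.inl p) = Ideal.Quotient.mk (stmt10I A e k)
          ((X 0 : MvPolynomial (Fin 3) A) ^ p.1.1 * (X 2) ^ p.1.2)) ∧
      (∀ p : {p : ℕ × ℕ // 1 ≤ p.1 ∧ p.1 * e + p.2 ≤ k},
        B (Sum.inr p) = Ideal.Quotient.mk (stmt10I A e k)
          ((X 1 : MvPolynomial (Fin 3) A) ^ p.1.1 * (X 2) ^ p.1.2))) ∧
    (∀ r : MvPolynomial (Fin 3) A ⧸ stmt10I A e k,
      ∃ c : (ℕ ⊕ ℕ) →₀ (Polynomial A ⧸ Ideal.span {(Polynomial.X : Polynomial A) ^ (k + 1)}),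
        r = c.sum (fun s a => ψ a *
          Sum.elim
            (fun i => Ideal.Quotient.mk (stmt10I A e k)
              ((X 0 : MvPolynomial (Fin 3) A) ^ i))
            (fun j => Ideal.Quotient.mk (stmt10I A e k)
              ((X 1 : MvPolynomial (Fin 3) A) ^ (j + 1))) s)) ∧
    (∀ r : MvPolynomial (Fin 3) A ⧸ stmt10I A e k,
      ∃! cw : (ℕ →₀ (Polynomial A ⧸ Ideal.span {(Polynomial.X : Polynomial A) ^ (k + 1)})) ×
          (MvPolynomial (Fin 3) A ⧸ stmt10I A e k),
        (∃ d : ℕ →₀ (Polynomial A ⧸ Ideal.span {(Polynomial.X : Polynomial A) ^ (k + 1)}),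
          cw.2 = d.sum (fun j a => ψ a * Ideal.Quotient.mk (stmt10I A e k)
            ((X 1 : MvPolynomial (Fin 3) A) ^ (j + 1)))) ∧
        r = cw.1.sum (fun i a => ψ a * Ideal.Quotient.mk (stmt10I A e k)
            ((X 0 : MvPolynomial (Fin 3) A) ^ i)) + cw.2) := by
  refine ⟨⟨Thickening.basis A e k, fun _ => Thickening.basis_apply _,
    fun _ => Thickening.basis_apply _⟩, fun r => ?_, fun r => ?_⟩
  · obtain ⟨c, d, hr⟩ := Thickening.exists_eq_xCombination_add_yCombination hψC hψX r
    exact ⟨c.sumElim d, by rw [Finsupp.sum_sumElim]; exact hr⟩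
  · obtain ⟨c, d, hr⟩ := Thickening.exists_eq_xCombination_add_yCombination hψC hψX r
    refine ⟨(c, Thickening.yCombination ψ d), ⟨⟨d, rfl⟩, hr⟩, ?_⟩
    rintro ⟨c', w'⟩ ⟨⟨d', hw'⟩, hr'⟩
    obtain ⟨rfl, rfl⟩ := Thickening.eq_of_xCombination_add_eq hψC hψX
      (hw' ▸ Thickening.yCombination_mem hψC hψX d') (Thickening.yCombination_mem hψC hψX d)
      (hr'.symm.trans hr)
    rfl

/-- `R₋` is a free `A`-module with basis `{x^i t^γ : i ≥ 0, γ ≤ k} ∪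
{y^j t^γ : j ≥ 1, je + γ ≤ k}`; in particular it is generated over `A[t]/(t^{k+1})`
(acting through `ψ`) by the `x^i` (`i ≥ 0`) and `y^j` (`j ≥ 1`), and the
`A[t]/(t^{k+1})`-submodule generated by the `x^i` is a free direct summand with
basis `{x^i}`. -/
theorem stmt10 (A : Type*) [CommRing A] (e k : ℕ) (he : 1 ≤ e)
    (ψ : (Polynomial A ⧸ Ideal.span {(Polynomial.X : Polynomial A) ^ (k + 1)}) →+*
      (MvPolynomial (Fin 3) A ⧸ stmt10I A e k))
    (hψC : ∀ a : A,
      ψ (Ideal.Quotient.mk (Ideal.span {(Polynomial.X : Polynomial A) ^ (k + 1)})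
          (Polynomial.C a)) =
        Ideal.Quotient.mk (stmt10I A e k) (C a))
    (hψX : ψ (Ideal.Quotient.mk (Ideal.span {(Polynomial.X : Polynomial A) ^ (k + 1)})
          Polynomial.X) =
        Ideal.Quotient.mk (stmt10I A e k) (X 2)) :
    (∃ B : Module.Basis ({p : ℕ × ℕ // p.2 ≤ k} ⊕ {p : ℕ × ℕ // 1 ≤ p.1 ∧ p.1 * e + p.2 ≤ k}) A
        (MvPolynomial (Fin 3) A ⧸ stmt10I A e k),
      (∀ p : {p : ℕ × ℕ // p.2 ≤ k},
        B (Sum.inl p) = Ideal.Quotient.mk (stmt10I A e k)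
          ((X 0 : MvPolynomial (Fin 3) A) ^ p.1.1 * (X 2) ^ p.1.2)) ∧
      (∀ p : {p : ℕ × ℕ // 1 ≤ p.1 ∧ p.1 * e + p.2 ≤ k},
        B (Sum.inr p) = Ideal.Quotient.mk (stmt10I A e k)
          ((X 1 : MvPolynomial (Fin 3) A) ^ p.1.1 * (X 2) ^ p.1.2))) ∧
    (∀ r : MvPolynomial (Fin 3) A ⧸ stmt10I A e k,
      ∃ c : (ℕ ⊕ ℕ) →₀ (Polynomial A ⧸ Ideal.span {(Polynomial.X : Polynomial A) ^ (k + 1)}),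
        r = c.sum (fun s a => ψ a *
          Sum.elim
            (fun i => Ideal.Quotient.mk (stmt10I A e k)
              ((X 0 : MvPolynomial (Fin 3) A) ^ i))
            (fun j => Ideal.Quotient.mk (stmt10I A e k)
              ((X 1 : MvPolynomial (Fin 3) A) ^ (j + 1))) s)) ∧
    (∀ r : MvPolynomial (Fin 3) A ⧸ stmt10I A e k,
      ∃! cw : (ℕ →₀ (Polynomial A ⧸ Ideal.span {(Polynomial.X : Polynomial A) ^ (k + 1)})) ×
          (MvPolynomial (Fin 3) A ⧸ stmt10I A e k),
        (∃ d : ℕ →₀ (Polynomial A ⧸ Ideal.span {(Polynomial.X : Polynomial A) ^ (k + 1)}),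
          cw.2 = d.sum (fun j a => ψ a * Ideal.Quotient.mk (stmt10I A e k)
            ((X 1 : MvPolynomial (Fin 3) A) ^ (j + 1)))) ∧
        r = cw.1.sum (fun i a => ψ a * Ideal.Quotient.mk (stmt10I A e k)
            ((X 0 : MvPolynomial (Fin 3) A) ^ i)) + cw.2) :=
  stmt10_general A e k ψ hψC hψX
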